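/- Under the hypotheses of the previous statement, if additionally the left-hand equality holds, i.e., D = (−1/min_{k∈S₁} wₖ + 1/Σ_{k∈S₄} wₖ)·(Σ_{k∈S₁} wₖ bₖ)², then S₁ is a singleton. -/

import Mathlib

/-!
Write `m = min_{S₁} w`, `W = Σ_{S₄} w` and `B = Σ_{S₁} w b = Σ_{S₄} w b`. On `S₄` the Cauchy–Schwarz
inequality (Sedrakyan's form) gives `Σ_{S₄} w b² ≥ B² / W`. On `S₁`, `w b² ≤ (w b)² / m`, and the sum
of squares of two or more positive numbers is strictly smaller than the square of their sum, so
`Σ_{S₁} w b² < B² / m` as soon as `S₁` has two elements. Then `D > (-1/m + 1/W) B²`, contradicting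
the assumed equality.
-/

namespace Finset

variable {ι R : Type*}

theorem sum_sq_lt_sq_sum [CommRing R] [LinearOrder R] [IsStrictOrderedRing R] {s : Finset ι}
    (hs : 1 < #s) {f : ι → R} (hf : ∀ i ∈ s, 0 < f i) :
    ∑ i ∈ s, f i ^ 2 < (∑ i ∈ s, f i) ^ 2 := by
  have hlt : ∀ i ∈ s, f i < ∑ j ∈ s, f j := fun i hi => by
    obtain ⟨j, hj, hji⟩ := exists_mem_ne hs i
    exact single_lt_sum hji hi hj (hf j hj) fun k hk _ => (hf k hk).le
  calc ∑ i ∈ s, f i ^ 2 < ∑ i ∈ s, f i * ∑ j ∈ s, f j :=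
        sum_lt_sum_of_nonempty (card_pos.mp (zero_lt_one.trans hs)) fun i hi => by
          rw [sq]; exact mul_lt_mul_of_pos_left (hlt i hi) (hf i hi)
    _ = (∑ i ∈ s, f i) ^ 2 := by rw [← sum_mul, sq]

variable [Field R] [LinearOrder R] [IsStrictOrderedRing R]

theorem sq_sum_mul_div_sum_le_sum_mul_sq (s : Finset ι) {w : ι → R} (hw : ∀ i ∈ s, 0 < w i)
    (b : ι → R) : (∑ i ∈ s, w i * b i) ^ 2 / ∑ i ∈ s, w i ≤ ∑ i ∈ s, w i * b i ^ 2 := by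
  refine (sq_sum_div_le_sum_sq_div s _ hw).trans_eq (sum_congr rfl fun i hi => ?_)
  field_simp [(hw i hi).ne']

theorem sum_mul_sq_lt_sq_sum_mul_div_inf' {s : Finset ι} (hne : s.Nonempty) (hs : 1 < #s)
    {w b : ι → R} (hw : ∀ i ∈ s, 0 < w i) (hb : ∀ i ∈ s, 0 < b i) :
    ∑ i ∈ s, w i * b i ^ 2 < (∑ i ∈ s, w i * b i) ^ 2 / s.inf' hne w := by
  have hm : 0 < s.inf' hne w := (lt_inf'_iff hne).mpr hw
  calc ∑ i ∈ s, w i * b i ^ 2 ≤ ∑ i ∈ s, (w i * b i) ^ 2 / s.inf' hne w :=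
        sum_le_sum fun i hi => by
          rw [le_div_iff₀ hm]
          calc w i * b i ^ 2 * s.inf' hne w ≤ w i * b i ^ 2 * w i :=
                mul_le_mul_of_nonneg_left (inf'_le w hi) (by positivity [(hw i hi).le])
            _ = (w i * b i) ^ 2 := by ring
    _ = (∑ i ∈ s, (w i * b i) ^ 2) / s.inf' hne w := (sum_div ..).symm
    _ < (∑ i ∈ s, w i * b i) ^ 2 / s.inf' hne w :=
        div_lt_div_of_pos_right (sum_sq_lt_sq_sum hs fun i hi => mul_pos (hw i hi) (hb i hi)) hm

end Finset

theorem stmt8_general (S1 S4 : Finset ℕ) (h1 : S1.Nonempty)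
    (w b : ℕ → ℝ)
    (hw : ∀ k ∈ S1 ∪ S4, 0 < w k) (hb : ∀ k ∈ S1 ∪ S4, 0 < b k)
    (heq : ∑ k ∈ S1, w k * b k = ∑ k ∈ S4, w k * b k)
    (D : ℝ) (hD : D = -(∑ k ∈ S1, w k * b k ^ 2) + ∑ k ∈ S4, w k * b k ^ 2)
    (heqL : D = (-(1 / S1.inf' h1 w) + 1 / ∑ k ∈ S4, w k) * (∑ k ∈ S1, w k * b k) ^ 2) :
    S1.card = 1 := by
  by_contra hcard
  have hS1 : 1 < S1.card := lt_of_le_of_ne h1.card_pos (Ne.symm hcard)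
  have hlt := Finset.sum_mul_sq_lt_sq_sum_mul_div_inf' h1 hS1
    (fun k hk => hw k (Finset.mem_union_left _ hk)) (fun k hk => hb k (Finset.mem_union_left _ hk))
  have hle := Finset.sq_sum_mul_div_sum_le_sum_mul_sq S4
    (fun k hk => hw k (Finset.mem_union_right _ hk)) b
  rw [← heq] at hle
  have hexpand : (-(1 / S1.inf' h1 w) + 1 / ∑ k ∈ S4, w k) * (∑ k ∈ S1, w k * b k) ^ 2
      = -((∑ k ∈ S1, w k * b k) ^ 2 / S1.inf' h1 w)
        + (∑ k ∈ S1, w k * b k) ^ 2 / ∑ k ∈ S4, w k := by ring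
  linarith

/-- If the left-hand equality in the two-sided bound on D holds, then S₁ is a
singleton. -/
theorem stmt8 (S1 S4 : Finset ℕ) (h1 : S1.Nonempty) (h4 : S4.Nonempty)
    (hdisj : Disjoint S1 S4) (w b : ℕ → ℝ)
    (hw : ∀ k ∈ S1 ∪ S4, 0 < w k) (hb : ∀ k ∈ S1 ∪ S4, 0 < b k)
    (heq : ∑ k ∈ S1, w k * b k = ∑ k ∈ S4, w k * b k)
    (D : ℝ) (hD : D = -(∑ k ∈ S1, w k * b k ^ 2) + ∑ k ∈ S4, w k * b k ^ 2)
    (heqL : D = (-(1 / S1.inf' h1 w) + 1 / ∑ k ∈ S4, w k) * (∑ k ∈ S1, w k * b k) ^ 2) :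
    S1.card = 1 :=
  stmt8_general S1 S4 h1 w b hw hb heq D hD heqL
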